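/- arXiv:1605.00187 — 2 statements merged into one kernel-verified Lean document; each statement's English description precedes it below -/
import Mathlib

section
/- If μ is a weakly s-regular Borel probability measure on [0,1)^d and A is a Borel set with μ(A) > 0, then the normalized restriction μ_A (defined by μ_A(B) = μ(A ∩ B)/μ(A)) is weakly s-regular. -/
open MeasureTheory Metric Set Filter
open scoped ENNReal NNReal Topology

noncomputable section

/-- The plane `ℝ²` with the Euclidean norm. -/
abbrev Plane := EuclideanSpace ℝ (Fin 2)

/-- The closed unit square `[0,1]²`. -/
def unitSquare : Set Plane := {x | ∀ i, 0 ≤ x i ∧ x i ≤ 1}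

/-- The half-open unit cube `[0,1)^d`. -/
def unitCubeHO (d : ℕ) : Set (EuclideanSpace ℝ (Fin d)) := {x | ∀ i, 0 ≤ x i ∧ x i < 1}

/-- The pinned distance set `dist(x,A) = {|x-y| : y ∈ A}`. -/
def pinnedDist (x : Plane) (A : Set Plane) : Set ℝ := (fun y => dist x y) '' A

/-- The distance set `dist(A,B) = {|x-y| : x ∈ A, y ∈ B}`. -/
def distSet (A B : Set Plane) : Set ℝ := {r | ∃ x ∈ A, ∃ y ∈ B, r = dist x y}

/-- Number of cells of the grid `εℤ` that intersect `F ⊆ ℝ`. -/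
def gridCount (F : Set ℝ) (ε : ℝ) : ℕ :=
  Nat.card {n : ℤ // (Set.Ico ((n : ℝ) * ε) (((n : ℝ) + 1) * ε) ∩ F).Nonempty}

/-- Number of cells of the grid `εℤ²` that intersect `F ⊆ ℝ²`. -/
def gridCount2 (F : Set Plane) (ε : ℝ) : ℕ :=
  Nat.card {n : Fin 2 → ℤ //
    ({x : Plane | ∀ i, (n i : ℝ) * ε ≤ x i ∧ x i < ((n i : ℝ) + 1) * ε} ∩ F).Nonempty}

/-- Lower box-counting dimension of `F ⊆ ℝ`. -/
def lbdim (F : Set ℝ) : ℝ :=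
  Filter.liminf (fun ε : ℝ => Real.log (gridCount F ε) / (-Real.log ε)) (nhdsWithin 0 (Set.Ioi 0))

/-- Upper box-counting dimension of `F ⊆ ℝ`. -/
def ubdim (F : Set ℝ) : ℝ :=
  Filter.limsup (fun ε : ℝ => Real.log (gridCount F ε) / (-Real.log ε)) (nhdsWithin 0 (Set.Ioi 0))

/-- Lower box-counting dimension of `F ⊆ ℝ²`. -/
def lbdim2 (F : Set Plane) : ℝ :=
  Filter.liminf (fun ε : ℝ => Real.log (gridCount2 F ε) / (-Real.log ε)) (nhdsWithin 0 (Set.Ioi 0))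

/-- Upper box-counting dimension of `F ⊆ ℝ²`. -/
def ubdim2 (F : Set Plane) : ℝ :=
  Filter.limsup (fun ε : ℝ => Real.log (gridCount2 F ε) / (-Real.log ε)) (nhdsWithin 0 (Set.Ioi 0))

/-- Modified lower box-counting dimension of `F ⊆ ℝ`. -/
def mlbdim (F : Set ℝ) : ℝ :=
  sInf {a : ℝ | ∃ G : ℕ → Set ℝ, (∀ i, Bornology.IsBounded (G i)) ∧ (F ⊆ ⋃ i, G i) ∧
    ∀ i, lbdim (G i) ≤ a}

/-- A set `E ⊆ ℝ^d` is discrete `(s,C)`-Ahlfors regular at scale `2^{-N}`. -/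
def DiscreteAhlfors (d : ℕ) (E : Set (EuclideanSpace ℝ (Fin d))) (s C : ℝ) (N : ℕ) : Prop :=
  E.Finite ∧ ∀ x ∈ E, ∀ k : ℕ, k < N →
    C⁻¹ * (2 : ℝ) ^ (((N : ℝ) - (k : ℝ)) * s)
        ≤ (Nat.card ↥(E ∩ closedBall x ((2 : ℝ) ^ (-(k : ℤ)))) : ℝ) ∧
    (Nat.card ↥(E ∩ closedBall x ((2 : ℝ) ^ (-(k : ℤ)))) : ℝ)
        ≤ C * (2 : ℝ) ^ (((N : ℝ) - (k : ℝ)) * s)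

/-- Topological support of a measure. -/
def msupport {X : Type*} [TopologicalSpace X] [MeasurableSpace X]
    (μ : MeasureTheory.Measure X) : Set X :=
  {x | ∀ U : Set X, IsOpen U → x ∈ U → 0 < μ U}

/-- A measure is `(s,C)`-Ahlfors regular at scale `2^{-N}`. -/
def ARMeasureAtScale (d : ℕ) (ν : Measure (EuclideanSpace ℝ (Fin d))) (s C : ℝ) (N : ℕ) : Prop :=
  ∀ x ∈ msupport ν, ∀ r : ℝ, (2 : ℝ) ^ (-(N : ℤ)) ≤ r → r ≤ 1 →
    ENNReal.ofReal (C⁻¹ * r ^ s) ≤ ν (closedBall x r) ∧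
      ν (closedBall x r) ≤ ENNReal.ofReal (C * r ^ s)

/-- A measure is `(s,C)`-Ahlfors regular. -/
def ARMeasure (d : ℕ) (ν : Measure (EuclideanSpace ℝ (Fin d))) (s C : ℝ) : Prop :=
  ∀ x ∈ msupport ν, ∀ r : ℝ, 0 < r → r ≤ 1 →
    ENNReal.ofReal (C⁻¹ * r ^ s) ≤ ν (closedBall x r) ∧
      ν (closedBall x r) ≤ ENNReal.ofReal (C * r ^ s)

/-- A set `E` is `(s,C)`-Ahlfors regular: `ℋ^s|_E` is a positive finite `(s,C)`-Ahlfors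
regular measure. -/
def ARSet (d : ℕ) (E : Set (EuclideanSpace ℝ (Fin d))) (s C : ℝ) : Prop :=
  0 < μH[s] E ∧ μH[s] E < ⊤ ∧ ARMeasure d (μH[s].restrict E) s C

/-- The half-open dyadic cube of generation `k` indexed by `m ∈ ℤ^d`. -/
def dcube (d k : ℕ) (m : Fin d → ℤ) : Set (EuclideanSpace ℝ (Fin d)) :=
  {x | ∀ i, (m i : ℝ) * (2 : ℝ) ^ (-(k : ℤ)) ≤ x i ∧ x i < ((m i : ℝ) + 1) * (2 : ℝ) ^ (-(k : ℤ))}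

/-- The homothety mapping the dyadic cube `dcube d k m` onto `[0,1)^d`. -/
def cubeMap (d k : ℕ) (m : Fin d → ℤ) (x : EuclideanSpace ℝ (Fin d)) :
    EuclideanSpace ℝ (Fin d) :=
  (EuclideanSpace.equiv (Fin d) ℝ).symm (fun i => (2 : ℝ) ^ k * x i - (m i : ℝ))

/-- The (left) corner of the dyadic cube `dcube d N m`. -/
def cubeCorner (d N : ℕ) (m : Fin d → ℤ) : EuclideanSpace ℝ (Fin d) :=
  (EuclideanSpace.equiv (Fin d) ℝ).symm (fun i => (m i : ℝ) * (2 : ℝ) ^ (-(N : ℤ)))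

/-- `μ^Q`: the normalized restriction of `μ` to a dyadic cube, renormalized to `[0,1)^d`. -/
def cubeMeasure (d k : ℕ) (m : Fin d → ℤ) (μ : Measure (EuclideanSpace ℝ (Fin d))) :
    Measure (EuclideanSpace ℝ (Fin d)) :=
  Measure.map (cubeMap d k m) ((μ (dcube d k m))⁻¹ • μ.restrict (dcube d k m))

/-- Entropy (base 2) of `μ` with respect to the dyadic partition of generation `k`. -/
def entropy (d : ℕ) (μ : Measure (EuclideanSpace ℝ (Fin d))) (k : ℕ) : ℝ :=
  ∑' m : Fin d → ℤ, -((μ (dcube d k m)).toReal * Real.logb 2 (μ (dcube d k m)).toReal)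

/-- Normalized entropy `H_k(μ) = H(μ, 𝒟_k)/k`. -/
def nentropy (d : ℕ) (μ : Measure (EuclideanSpace ℝ (Fin d))) (k : ℕ) : ℝ :=
  entropy d μ k / k

/-- The half-open dyadic interval of generation `k` indexed by `m ∈ ℤ`. -/
def dint (k : ℕ) (m : ℤ) : Set ℝ :=
  Set.Ico ((m : ℝ) * (2 : ℝ) ^ (-(k : ℤ))) (((m : ℝ) + 1) * (2 : ℝ) ^ (-(k : ℤ)))

/-- Entropy (base 2) of a measure on `ℝ` with respect to dyadic intervals of generation `k`. -/
def entropyR (μ : Measure ℝ) (k : ℕ) : ℝ :=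
  ∑' m : ℤ, -((μ (dint k m)).toReal * Real.logb 2 (μ (dint k m)).toReal)

/-- Normalized entropy of a measure on `ℝ`. -/
def nentropyR (μ : Measure ℝ) (k : ℕ) : ℝ :=
  entropyR μ k / k

open Classical in
/-- `μ` is `s`-rich at resolution `(N,q,δ)`. -/
def sRich (d : ℕ) (μ : Measure (EuclideanSpace ℝ (Fin d))) (s : ℝ) (N q : ℕ) (δ : ℝ) : Prop :=
  (1 / N : ℝ) * ∑ n ∈ Finset.range N, ∑' m : Fin d → ℤ,
    (if 0 < μ (dcube d n m) ∧ nentropy d (cubeMeasure d n m μ) q < s - δ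
      then (μ (dcube d n m)).toReal else 0) < δ

/-- `μ` is weakly `s`-regular. -/
def WeaklyRegular (d : ℕ) (μ : Measure (EuclideanSpace ℝ (Fin d))) (s : ℝ) : Prop :=
  ∀ δ : ℝ, 0 < δ → ∃ q : ℕ, ∃ N₀ : ℕ, ∀ N : ℕ, N₀ ≤ N → sRich d μ s N q δ

/-- Average of the quantity `f(μ^Q)` with respect to the scenery distribution `⟨μ⟩_{[0,N)}`. -/
def sceneryAvg (d : ℕ) (μ : Measure (EuclideanSpace ℝ (Fin d))) (N : ℕ)
    (f : Measure (EuclideanSpace ℝ (Fin d)) → ℝ) : ℝ :=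
  (1 / N : ℝ) * ∑ n ∈ Finset.range N, ∑' m : Fin d → ℤ,
    (μ (dcube d n m)).toReal * f (cubeMeasure d n m μ)

/-- The two-sided open cone with apex `a`, direction `v` and half-opening angle `β`. -/
def cone (a : Plane) (β : ℝ) (v : Plane) : Set Plane :=
  {x | x ≠ a ∧ (InnerProductGeometry.angle (x - a) v < β ∨
      InnerProductGeometry.angle (x - a) (-v) < β)}

/-- `A` is `k`-discrete: every dyadic square of generation `k` contains at most one point. -/
def kDiscrete (A : Set Plane) (k : ℕ) : Prop :=
  ∀ m : Fin 2 → ℤ, (A ∩ dcube 2 k m).Subsingleton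

/-- Hausdorff dimension of a measure: `inf {dimH E : μ E > 0}`. -/
def hdimMeasure (d : ℕ) (μ : Measure (EuclideanSpace ℝ (Fin d))) : ℝ≥0∞ :=
  ⨅ (E : Set (EuclideanSpace ℝ (Fin d))) (_ : 0 < μ E), dimH E

/-- Orthogonal projection onto direction `v`: `Π_v(x) = v ⬝ x`. -/
def projDir (v x : Plane) : ℝ := inner ℝ v x

/-- The measure associated to a discrete set: `(1/#A) ∑_D #(A ∩ D) ℒ_D`. -/
def discreteToMeasure (d N : ℕ) (A : Set (EuclideanSpace ℝ (Fin d))) :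
    Measure (EuclideanSpace ℝ (Fin d)) :=
  (Nat.card ↥A : ℝ≥0∞)⁻¹ • Measure.sum (fun m : Fin d → ℤ =>
    (Nat.card ↥(A ∩ dcube d N m) : ℝ≥0∞) •
      ((volume (dcube d N m))⁻¹ • volume.restrict (dcube d N m)))


/-- The Katz--Tao example set
`A_N = {(i 2^{-N/2}, j 2^{-N}) : 0 ≤ i < 2^{N/2} - 1, 0 ≤ j < 2^{N/2}}`. -/
def exampleSet (N : ℕ) : Set Plane :=
  {p | ∃ i j : ℤ, 0 ≤ i ∧ i < 2 ^ (N / 2) - 1 ∧ 0 ≤ j ∧ j < 2 ^ (N / 2) ∧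
    p 0 = (i : ℝ) * (2 : ℝ) ^ (-((N / 2 : ℕ) : ℤ)) ∧ p 1 = (j : ℝ) * (2 : ℝ) ^ (-(N : ℤ))}

end

/-!
On a dyadic cube `Q` in which `A` has relative density `θ ≥ 1 - ε`, the blow-up `μ^Q` is the
mixture `θ • (μ_A)^Q + (1 - θ) • ρ` for a probability measure `ρ`; since entropy is concave
and at most `q d` at scale `2^{-q}`, `H_q(μ^Q) ≤ H_q((μ_A)^Q) + ε d + h(ε)` with `h` the
binary entropy. So a cube of high `A`-density that has low entropy for `μ_A` also has low
entropy for `μ` at a slightly larger threshold, and its `μ_A`-mass is at most `μ(A)⁻¹` times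
its `μ`-mass. The remaining low-entropy cubes of `μ_A` have low `A`-density; approximating `A`
from inside by a compact set and from outside by an open set shows that their total
`μ_A`-mass at generation `n` tends to `0`, hence so does its Cesàro average over `n < N`.
-/

namespace Real

lemma negMulLog_add_le {u v : ℝ} (hu : 0 ≤ u) (hv : 0 ≤ v) :
    negMulLog (u + v) ≤ negMulLog u + negMulLog v := by
  rcases hu.eq_or_lt with rfl | hu'
  · simp
  rcases hv.eq_or_lt with rfl | hv'
  · simp
  have h₁ : log u ≤ log (u + v) := log_le_log hu' (by linarith)
  have h₂ : log v ≤ log (u + v) := log_le_log hv' (by linarith)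
  simp only [negMulLog]
  nlinarith [mul_le_mul_of_nonneg_left h₁ hu, mul_le_mul_of_nonneg_left h₂ hv]

lemma sum_negMulLog_le {ι : Type*} (F : Finset ι) {y : ι → ℝ} (hy : ∀ i ∈ F, 0 ≤ y i) :
    ∑ i ∈ F, negMulLog (y i) ≤
      (∑ i ∈ F, y i) * log F.card + negMulLog (∑ i ∈ F, y i) := by
  rcases F.eq_empty_or_nonempty with rfl | hF
  · simp
  have hn : (0 : ℝ) < F.card := by exact_mod_cast hF.card_pos
  have hJensen := concaveOn_negMulLog.le_map_sum (t := F) (w := fun _ => (F.card : ℝ)⁻¹)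
    (p := y) (fun _ _ => by positivity) (by simp [hn.ne']) hy
  simp only [smul_eq_mul, ← Finset.mul_sum] at hJensen
  rw [mul_comm, negMulLog_mul, negMulLog, log_inv] at hJensen
  have := mul_le_mul_of_nonneg_left hJensen hn.le
  field_simp at this
  linarith

end Real

lemma Summable.ite_of_nonneg {ι : Type*} {f : ι → ℝ} (hf : Summable f) (h0 : ∀ i, 0 ≤ f i)
    (p : ι → Prop) [DecidablePred p] : Summable fun i => if p i then f i else 0 :=
  hf.of_nonneg_of_le (fun i => by split_ifs <;> simp [h0]) fun i => by split_ifs <;> simp [h0]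

lemma MeasurableSet.exists_isCompact_isOpen_sdiff_lt {α : Type*} [TopologicalSpace α]
    [MeasurableSpace α] [OpensMeasurableSpace α] [T2Space α] {μ : Measure α}
    [μ.InnerRegularCompactLTTop] [μ.OuterRegular] {A : Set α} (hA : MeasurableSet A)
    (hA' : μ A ≠ ⊤) {r : ℝ≥0∞} (hr : r ≠ 0) :
    ∃ K U, K ⊆ A ∧ A ⊆ U ∧ IsCompact K ∧ IsOpen U ∧ μ (U \ K) < r := by
  obtain ⟨K, hKA, hK, hAK⟩ := hA.exists_isCompact_sdiff_lt hA' (ENNReal.half_pos hr).ne'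
  obtain ⟨U, hAU, hU, -, hUA⟩ := hA.exists_isOpen_sdiff_lt hA' (ENNReal.half_pos hr).ne'
  refine ⟨K, U, hKA, hAU, hK, hU, ?_⟩
  calc μ (U \ K) ≤ μ (U \ A) + μ (A \ K) :=
        (measure_mono fun x (hx : x ∈ U \ K) => by by_cases x ∈ A <;> simp_all).trans
          (measure_union_le _ _)
    _ < r / 2 + r / 2 := ENNReal.add_lt_add hUA hAK
    _ = r := ENNReal.add_halves r

noncomputable section

open Real ProbabilityTheory

variable {d : ℕ}

def dyadicIndex (k : ℕ) (x : EuclideanSpace ℝ (Fin d)) : Fin d → ℤ :=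
  fun i => ⌊(2 : ℝ) ^ k * x i⌋

lemma mem_dcube_iff {k : ℕ} {m : Fin d → ℤ} {x : EuclideanSpace ℝ (Fin d)} :
    x ∈ dcube d k m ↔ dyadicIndex k x = m := by
  have h2k : (0 : ℝ) < 2 ^ k := by positivity
  simp only [dcube, mem_ofPred_eq, dyadicIndex, funext_iff, Int.floor_eq_iff, zpow_neg,
    zpow_natCast, mul_inv_le_iff₀ h2k, lt_mul_inv_iff₀ h2k, mul_comm (x _)]

lemma dcube_eq_preimage_dyadicIndex (k : ℕ) (m : Fin d → ℤ) :
    dcube d k m = dyadicIndex k ⁻¹' {m} := by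
  ext x; exact mem_dcube_iff

lemma measurable_dyadicIndex (k : ℕ) : Measurable (dyadicIndex (d := d) k) :=
  measurable_pi_lambda _ fun i => by unfold dyadicIndex; fun_prop

lemma measurableSet_dcube (k : ℕ) (m : Fin d → ℤ) : MeasurableSet (dcube d k m) := by
  rw [dcube_eq_preimage_dyadicIndex]
  exact measurable_dyadicIndex k (measurableSet_singleton m)

open Function in
lemma pairwise_disjoint_dcube (k : ℕ) : Pairwise (Disjoint on dcube d k) := by
  intro m m' h
  simp only [Function.onFun, dcube_eq_preimage_dyadicIndex]
  exact (disjoint_singleton.2 h).preimage _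

lemma iUnion_dcube (k : ℕ) : ⋃ m, dcube d k m = univ :=
  eq_univ_of_forall fun _ => mem_iUnion.2 ⟨_, mem_dcube_iff.2 rfl⟩

lemma dcube_eq_preimage_cubeMap (k : ℕ) (m : Fin d → ℤ) :
    dcube d k m = cubeMap d k m ⁻¹' unitCubeHO d := by
  ext x
  simp only [mem_dcube_iff, dyadicIndex, funext_iff, Int.floor_eq_iff, mem_preimage,
    unitCubeHO, mem_ofPred_eq]
  refine forall_congr' fun i => ?_
  change _ ↔ 0 ≤ (2 : ℝ) ^ k * x i - m i ∧ (2 : ℝ) ^ k * x i - m i < 1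
  constructor <;> rintro ⟨h₁, h₂⟩ <;> constructor <;> linarith

lemma dist_le_of_mem_dcube {k : ℕ} {m : Fin d → ℤ} {x y : EuclideanSpace ℝ (Fin d)}
    (hx : x ∈ dcube d k m) (hy : y ∈ dcube d k m) : dist x y ≤ √d * 2 ^ (-(k : ℤ)) := by
  have hcoord : ∀ i, dist (x i) (y i) ^ 2 ≤ ((2 : ℝ) ^ (-(k : ℤ))) ^ 2 := by
    intro i
    obtain ⟨hx₁, hx₂⟩ := hx i
    obtain ⟨hy₁, hy₂⟩ := hy i
    rw [Real.dist_eq, sq_abs]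
    nlinarith
  calc dist x y = √(∑ i, dist (x i) (y i) ^ 2) := EuclideanSpace.dist_eq x y
    _ ≤ √(d * ((2 : ℝ) ^ (-(k : ℤ))) ^ 2) := by
      gcongr
      simpa using Finset.sum_le_sum fun i (_ : i ∈ Finset.univ) => hcoord i
    _ = √d * 2 ^ (-(k : ℤ)) := by
      rw [Real.sqrt_mul (by positivity), Real.sqrt_sq (by positivity)]

def unitCubeIndices (d q : ℕ) : Finset (Fin d → ℤ) :=
  Fintype.piFinset fun _ => Finset.Ico 0 (2 ^ q)

lemma card_unitCubeIndices (d q : ℕ) : (unitCubeIndices d q).card = 2 ^ (q * d) := by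
  have h : (2 ^ q : ℤ).toNat = 2 ^ q := by exact_mod_cast Int.toNat_natCast (2 ^ q)
  simp [unitCubeIndices, Fintype.card_piFinset, h, pow_mul]

lemma unitCubeHO_eq_biUnion (q : ℕ) :
    unitCubeHO d = ⋃ m ∈ unitCubeIndices d q, dcube d q m := by
  have h2q : (0 : ℝ) < 2 ^ q := by positivity
  ext x
  have hmem : x ∈ ⋃ m ∈ unitCubeIndices d q, dcube d q m ↔
      dyadicIndex q x ∈ unitCubeIndices d q := by
    simp only [mem_iUnion, mem_dcube_iff, exists_prop]
    exact ⟨fun ⟨m, hm, h⟩ => h ▸ hm, fun h => ⟨_, h, rfl⟩⟩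
  rw [hmem]
  simp only [unitCubeHO, mem_ofPred_eq, unitCubeIndices, Fintype.mem_piFinset, Finset.mem_Ico,
    dyadicIndex, Int.floor_nonneg, Int.floor_lt]
  refine forall_congr' fun i => and_congr (mul_nonneg_iff_of_pos_left h2q).symm ?_
  push_cast
  exact (mul_lt_iff_lt_one_right h2q).symm

lemma tsum_measure_dcube_inter (μ : Measure (EuclideanSpace ℝ (Fin d))) (k : ℕ)
    {S : Set (EuclideanSpace ℝ (Fin d))} (hS : MeasurableSet S) :
    ∑' m, μ (dcube d k m ∩ S) = μ S := by
  rw [← measure_iUnion (fun m m' h => (pairwise_disjoint_dcube k h).mono inter_subset_left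
    inter_subset_left) fun m => (measurableSet_dcube k m).inter hS, ← iUnion_inter,
    iUnion_dcube, univ_inter]

lemma summable_toReal_measure_dcube_inter (μ : Measure (EuclideanSpace ℝ (Fin d)))
    [IsFiniteMeasure μ] (k : ℕ) {S : Set (EuclideanSpace ℝ (Fin d))} (hS : MeasurableSet S) :
    Summable fun m => (μ (dcube d k m ∩ S)).toReal :=
  ENNReal.summable_toReal (by rw [tsum_measure_dcube_inter μ k hS]; exact measure_ne_top μ S)

lemma tsum_toReal_measure_dcube_inter (μ : Measure (EuclideanSpace ℝ (Fin d)))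
    [IsFiniteMeasure μ] (k : ℕ) {S : Set (EuclideanSpace ℝ (Fin d))} (hS : MeasurableSet S) :
    ∑' m, (μ (dcube d k m ∩ S)).toReal = (μ S).toReal := by
  rw [← ENNReal.tsum_toReal_eq fun m => measure_ne_top μ _, tsum_measure_dcube_inter μ k hS]

lemma summable_toReal_measure_dcube (μ : Measure (EuclideanSpace ℝ (Fin d)))
    [IsFiniteMeasure μ] (k : ℕ) : Summable fun m => (μ (dcube d k m)).toReal := by
  simpa using summable_toReal_measure_dcube_inter μ k MeasurableSet.univ

lemma measurableSet_unitCubeHO : MeasurableSet (unitCubeHO d) := by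
  rw [unitCubeHO_eq_biUnion 0]
  exact Finset.measurableSet_biUnion _ fun m _ => measurableSet_dcube 0 m

section SupportedOnUnitCube

variable {ξ : Measure (EuclideanSpace ℝ (Fin d))} (hξ : ξ (unitCubeHO d)ᶜ = 0) (q : ℕ)
include hξ

lemma measure_dcube_eq_zero {m : Fin d → ℤ} (hm : m ∉ unitCubeIndices d q) :
    ξ (dcube d q m) = 0 := by
  refine measure_mono_null (fun x hx (hxU : x ∈ unitCubeHO d) => hm ?_) hξ
  rw [unitCubeHO_eq_biUnion q] at hxU
  obtain ⟨m', hm', hxm'⟩ := mem_iUnion₂.1 hxU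
  rwa [← mem_dcube_iff.1 hx, mem_dcube_iff.1 hxm']

lemma sum_toReal_measure_dcube [IsFiniteMeasure ξ] :
    ∑ m ∈ unitCubeIndices d q, (ξ (dcube d q m)).toReal = (ξ univ).toReal := by
  rw [← ENNReal.toReal_sum fun m _ => measure_ne_top ξ _, ← measure_biUnion_finset
    (fun m _ m' _ h => pairwise_disjoint_dcube q h) fun m _ => measurableSet_dcube q m,
    ← unitCubeHO_eq_biUnion, ← measure_add_measure_compl measurableSet_unitCubeHO, hξ,
    add_zero]

lemma entropy_eq_sum :
    entropy d ξ q =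
      (∑ m ∈ unitCubeIndices d q, negMulLog (ξ (dcube d q m)).toReal) / log 2 := by
  rw [entropy, tsum_eq_sum fun m hm => by simp [measure_dcube_eq_zero hξ q hm], Finset.sum_div]
  refine Finset.sum_congr rfl fun m _ => ?_
  rw [negMulLog, logb]
  ring

lemma entropy_smul [IsFiniteMeasure ξ] (c : ℝ≥0∞) :
    entropy d (c • ξ) q =
      c.toReal * entropy d ξ q + (ξ univ).toReal * negMulLog c.toReal / log 2 := by
  rw [entropy_eq_sum (by simp [hξ]) q, entropy_eq_sum hξ q, ← sum_toReal_measure_dcube hξ q]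
  simp only [Measure.smul_apply, smul_eq_mul, ENNReal.toReal_mul, negMulLog_mul]
  rw [Finset.sum_add_distrib, ← Finset.sum_mul, ← Finset.mul_sum]
  ring

lemma entropy_le [IsFiniteMeasure ξ] :
    entropy d ξ q ≤ (ξ univ).toReal * (q * d) + negMulLog (ξ univ).toReal / log 2 := by
  have hlog2 : 0 < log 2 := log_pos one_lt_two
  have hcard : log (unitCubeIndices d q).card = q * d * log 2 := by
    rw [card_unitCubeIndices, Nat.cast_pow, log_pow]; push_cast; ring
  have hsum := sum_negMulLog_le (unitCubeIndices d q) (y := fun m => (ξ (dcube d q m)).toReal)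
    fun _ _ => ENNReal.toReal_nonneg
  rw [hcard, sum_toReal_measure_dcube hξ q] at hsum
  rw [entropy_eq_sum hξ q, div_le_iff₀ hlog2]
  calc _ ≤ _ := hsum
    _ = _ := by field_simp

end SupportedOnUnitCube

lemma entropy_nonneg (ξ : Measure (EuclideanSpace ℝ (Fin d))) (h : ξ univ ≤ 1) (q : ℕ) :
    0 ≤ entropy d ξ q := by
  refine tsum_nonneg fun m => neg_nonneg.2 <| mul_nonpos_of_nonneg_of_nonpos ENNReal.toReal_nonneg
    (logb_nonpos one_lt_two ENNReal.toReal_nonneg ?_)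
  exact ENNReal.toReal_le_of_le_ofReal zero_le_one
    (by simpa using (measure_mono (subset_univ _)).trans h)

lemma entropy_add_le {ξ₁ ξ₂ : Measure (EuclideanSpace ℝ (Fin d))} [IsFiniteMeasure ξ₁]
    [IsFiniteMeasure ξ₂] (h₁ : ξ₁ (unitCubeHO d)ᶜ = 0)
    (h₂ : ξ₂ (unitCubeHO d)ᶜ = 0) (q : ℕ) :
    entropy d (ξ₁ + ξ₂) q ≤ entropy d ξ₁ q + entropy d ξ₂ q := by
  rw [entropy_eq_sum (by simp [h₁, h₂]) q, entropy_eq_sum h₁ q, entropy_eq_sum h₂ q,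
    ← add_div, ← Finset.sum_add_distrib]
  gcongr with m
  rw [Measure.add_apply, ENNReal.toReal_add (measure_ne_top _ _) (measure_ne_top _ _)]
  exact negMulLog_add_le ENNReal.toReal_nonneg ENNReal.toReal_nonneg

section CubeMeasure

variable (μ : Measure (EuclideanSpace ℝ (Fin d))) (n : ℕ) (m : Fin d → ℤ)

lemma measurable_cubeMap : Measurable (cubeMap d n m) := by
  unfold cubeMap; fun_prop

lemma cubeMeasure_apply {S : Set (EuclideanSpace ℝ (Fin d))} (hS : MeasurableSet S) :
    cubeMeasure d n m μ S =
      (μ (dcube d n m))⁻¹ * μ (cubeMap d n m ⁻¹' S ∩ dcube d n m) := by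
  rw [cubeMeasure, Measure.map_apply (measurable_cubeMap n m) hS, Measure.smul_apply,
    Measure.restrict_apply (measurable_cubeMap n m hS), smul_eq_mul]

lemma cubeMeasure_univ_le_one : cubeMeasure d n m μ univ ≤ 1 := by
  rw [cubeMeasure_apply μ n m MeasurableSet.univ, preimage_univ, univ_inter]
  exact ENNReal.inv_mul_le_one _

instance : IsFiniteMeasure (cubeMeasure d n m μ) :=
  ⟨(cubeMeasure_univ_le_one μ n m).trans_lt ENNReal.one_lt_top⟩

lemma cubeMeasure_compl_unitCubeHO : cubeMeasure d n m μ (unitCubeHO d)ᶜ = 0 := by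
  rw [cubeMeasure_apply μ n m measurableSet_unitCubeHO.compl, preimage_compl,
    ← dcube_eq_preimage_cubeMap, compl_inter_self, measure_empty, mul_zero]

lemma cubeMeasure_smul {c : ℝ≥0∞} (h0 : c ≠ 0) (hT : c ≠ ⊤) :
    cubeMeasure d n m (c • μ) = cubeMeasure d n m μ := by
  rw [cubeMeasure, cubeMeasure, Measure.smul_apply, Measure.restrict_smul, smul_smul, smul_eq_mul,
    ENNReal.mul_inv (Or.inl h0) (Or.inl hT), mul_comm c⁻¹, mul_assoc,
    ENNReal.inv_mul_cancel h0 hT, mul_one]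

lemma smul_cubeMeasure (h : μ (dcube d n m) ≠ ⊤) :
    μ (dcube d n m) • cubeMeasure d n m μ =
      (μ.restrict (dcube d n m)).map (cubeMap d n m) := by
  rw [cubeMeasure, ← Measure.map_smul, smul_smul]
  rcases eq_or_ne (μ (dcube d n m)) 0 with h0 | h0
  · simp [Measure.restrict_eq_zero.2 h0]
  · rw [ENNReal.mul_inv_cancel h0 h, one_smul]

lemma cubeMeasure_eq_add [IsFiniteMeasure μ] {A : Set (EuclideanSpace ℝ (Fin d))}
    (hA : MeasurableSet A) :
    cubeMeasure d n m μ =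
      (μ (dcube d n m ∩ A) / μ (dcube d n m)) • cubeMeasure d n m (μ.restrict A)
      + (μ (dcube d n m))⁻¹ • (μ.restrict (dcube d n m \ A)).map (cubeMap d n m) := by
  have hQ := measurableSet_dcube (d := d) n m
  have h := smul_cubeMeasure (μ.restrict A) n m (measure_ne_top _ _)
  rw [Measure.restrict_apply hQ, Measure.restrict_restrict hQ] at h
  rw [div_eq_mul_inv, mul_comm, mul_smul, h, ← smul_add,
    ← Measure.map_add _ _ (measurable_cubeMap n m), Measure.restrict_inter_add_sdiff _ hA,
    cubeMeasure, Measure.map_smul]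

/-- `μ^Q = θ • (μ|_A)^Q + ρ` with `θ = μ(Q ∩ A)/μ(Q)` and `ρ` of mass `1 - θ`: entropy
is subadditive, `ρ` has entropy at most `(1 - θ) q d` plus the entropy of its mass, and the
two weights together cost the binary entropy of `θ`. -/
lemma entropy_cubeMeasure_le [IsFiniteMeasure μ] {A : Set (EuclideanSpace ℝ (Fin d))}
    (hA : MeasurableSet A) (hQ : μ (dcube d n m) ≠ 0) (q : ℕ) :
    entropy d (cubeMeasure d n m μ) q ≤ entropy d (cubeMeasure d n m (μ.restrict A)) q
      + (μ (dcube d n m \ A) / μ (dcube d n m)).toReal * (q * d)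
      + binEntropy (μ (dcube d n m ∩ A) / μ (dcube d n m)).toReal / log 2 := by
  set Q := dcube d n m
  set ν := cubeMeasure d n m (μ.restrict A)
  set ρ := (μ Q)⁻¹ • (μ.restrict (Q \ A)).map (cubeMap d n m)
  set θ := (μ (Q ∩ A) / μ Q).toReal
  set β := (μ (Q \ A) / μ Q).toReal
  have hθβ : θ + β = 1 := by
    rw [← ENNReal.toReal_add (ENNReal.div_ne_top (measure_ne_top _ _) hQ)
      (ENNReal.div_ne_top (measure_ne_top _ _) hQ), ENNReal.div_add_div_same,
      measure_inter_add_sdiff _ hA, ENNReal.div_self hQ (measure_ne_top _ _), ENNReal.toReal_one]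
  have hθ1 : θ ≤ 1 := by linarith [ENNReal.toReal_nonneg (a := μ (Q \ A) / μ Q)]
  have hθν : IsFiniteMeasure ((μ (Q ∩ A) / μ Q) • ν) :=
    ν.smul_finite (ENNReal.div_ne_top (measure_ne_top _ _) hQ)
  have hρ : IsFiniteMeasure ρ := Measure.smul_finite _ (ENNReal.inv_ne_top.2 hQ)
  have hρQ : ρ (unitCubeHO d)ᶜ = 0 := by
    rw [Measure.smul_apply, Measure.map_apply (measurable_cubeMap n m)
      measurableSet_unitCubeHO.compl, Measure.restrict_apply' (measurableSet_dcube n m |>.diff hA),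
      preimage_compl, ← dcube_eq_preimage_cubeMap,
      (disjoint_compl_left.mono_right sdiff_subset).inter_eq, measure_empty, smul_zero]
  have hρuniv : (ρ univ).toReal = β := by
    rw [Measure.smul_apply, Measure.map_apply (measurable_cubeMap n m) MeasurableSet.univ,
      preimage_univ, Measure.restrict_apply_univ, smul_eq_mul, mul_comm, ← div_eq_mul_inv]
  have hνQ : ν (unitCubeHO d)ᶜ = 0 := cubeMeasure_compl_unitCubeHO _ n m
  have hν1 : (ν univ).toReal ≤ 1 :=
    ENNReal.toReal_le_of_le_ofReal zero_le_one (by simpa using cubeMeasure_univ_le_one _ n m)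
  have hνent := entropy_nonneg ν (cubeMeasure_univ_le_one _ n m) q
  have hθent : 0 ≤ negMulLog θ := negMulLog_nonneg ENNReal.toReal_nonneg hθ1
  calc entropy d (cubeMeasure d n m μ) q = entropy d ((μ (Q ∩ A) / μ Q) • ν + ρ) q := by
        rw [cubeMeasure_eq_add μ n m hA]
    _ ≤ entropy d ((μ (Q ∩ A) / μ Q) • ν) q + entropy d ρ q :=
        entropy_add_le (by simp [hνQ]) hρQ q
    _ = θ * entropy d ν q + (ν univ).toReal * negMulLog θ / log 2 + entropy d ρ q := by
        rw [entropy_smul hνQ]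
    _ ≤ entropy d ν q + negMulLog θ / log 2 + (β * (q * d) + negMulLog β / log 2) := by
        gcongr
        · exact mul_le_of_le_one_left hνent hθ1
        · exact mul_le_of_le_one_left hθent hν1
        · simpa [hρuniv] using entropy_le hρQ q
    _ = _ := by
        rw [binEntropy_eq_negMulLog_add_negMulLog_one_sub, ← hθβ, add_sub_cancel_left]
        ring

lemma nentropy_cubeMeasure_le [IsFiniteMeasure μ] {A : Set (EuclideanSpace ℝ (Fin d))}
    (hA : MeasurableSet A) (hQ : μ (dcube d n m) ≠ 0) {ε : ℝ} (hε : ε ≤ 1 / 2)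
    (hdense : (1 - ε) * (μ (dcube d n m)).toReal ≤ (μ (dcube d n m ∩ A)).toReal) (q : ℕ) :
    nentropy d (cubeMeasure d n m μ) q ≤
      nentropy d (cubeMeasure d n m (μ.restrict A)) q + (ε * d + binEntropy ε / log 2) := by
  set θ := (μ (dcube d n m ∩ A) / μ (dcube d n m)).toReal
  have hQpos : 0 < (μ (dcube d n m)).toReal := ENNReal.toReal_pos hQ (measure_ne_top _ _)
  have hθ : 1 - ε ≤ θ ∧ θ ≤ 1 := by
    rw [show θ = _ from ENNReal.toReal_div _ _, le_div_iff₀ hQpos, div_le_one hQpos]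
    exact ⟨hdense, ENNReal.toReal_mono (measure_ne_top _ _) (measure_mono inter_subset_left)⟩
  have hβ : (μ (dcube d n m \ A) / μ (dcube d n m)).toReal = 1 - θ := by
    rw [eq_sub_iff_add_eq, ← ENNReal.toReal_add (ENNReal.div_ne_top (measure_ne_top _ _) hQ)
      (ENNReal.div_ne_top (measure_ne_top _ _) hQ), ENNReal.div_add_div_same, add_comm,
      measure_inter_add_sdiff _ hA, ENNReal.div_self hQ (measure_ne_top _ _), ENNReal.toReal_one]
  have hbin : binEntropy θ ≤ binEntropy ε := by
    rw [← binEntropy_one_sub ε]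
    exact binEntropy_strictAntiOn.antitoneOn ⟨by linarith, by linarith⟩ ⟨by linarith, hθ.2⟩
      hθ.1
  have hloss : 0 ≤ binEntropy ε / log 2 := div_nonneg
    (binEntropy_nonneg (by linarith) (by linarith)) (log_pos one_lt_two).le
  have hentropy := entropy_cubeMeasure_le μ n m hA hQ q
  rw [hβ] at hentropy
  rcases q.eq_zero_or_pos with rfl | hq
  · simp only [nentropy, Nat.cast_zero, div_zero, zero_add]
    exact add_nonneg (mul_nonneg (by linarith) d.cast_nonneg) hloss
  have hq' : (1 : ℝ) ≤ q := by exact_mod_cast hq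
  rw [nentropy, nentropy, div_le_iff₀ (by positivity)]
  calc _ ≤ _ := hentropy
    _ ≤ entropy d (cubeMeasure d n m (μ.restrict A)) q + ε * (q * d) +
          binEntropy ε / log 2 := by
        gcongr
        linarith
    _ ≤ _ := by
        rw [add_mul, div_mul_cancel₀ _ (by positivity)]
        nlinarith

end CubeMeasure

lemma exists_mul_add_binEntropy_div_lt (d : ℕ) {c : ℝ} (hc : 0 < c) :
    ∃ ε, 0 < ε ∧ ε ≤ 1 / 2 ∧ ε * d + binEntropy ε / log 2 < c := by
  have hloss : Tendsto (fun ε : ℝ => ε * d + binEntropy ε / log 2) (𝓝[>] 0) (𝓝 0) := by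
    have hcont : Continuous fun ε : ℝ => ε * d + binEntropy ε / log 2 := by fun_prop
    simpa using (hcont.tendsto 0).mono_left nhdsWithin_le_nhds
  obtain ⟨ε, hlt, hε0, hε⟩ := ((hloss.eventually (gt_mem_nhds hc)).and
    (Ioo_mem_nhdsGT (by norm_num : (0 : ℝ) < 1 / 2))).exists
  exact ⟨ε, hε0, hε.le, hlt⟩

section LowDensity

variable (μ : Measure (EuclideanSpace ℝ (Fin d))) (A : Set (EuclideanSpace ℝ (Fin d)))

open Classical in
def lowDensityMass (ε : ℝ) (n : ℕ) : ℝ :=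
  ∑' m : Fin d → ℤ, if (μ (dcube d n m ∩ A)).toReal < (1 - ε) * (μ (dcube d n m)).toReal
    then (μ (dcube d n m ∩ A)).toReal else 0

lemma lowDensityMass_nonneg (ε : ℝ) (n : ℕ) : 0 ≤ lowDensityMass μ A ε n :=
  tsum_nonneg fun m => by split_ifs <;> simp

/-- A low-density cube meeting `K` lies in `U`, so `Q \ A ⊆ U \ K` carries at least an `ε`
fraction of its `A`-mass; a cube missing `K` has all of its `A`-mass in `U \ K`. -/
lemma mul_lowDensityMass_le [IsFiniteMeasure μ] (hA : MeasurableSet A)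
    {K U : Set (EuclideanSpace ℝ (Fin d))} (hKA : K ⊆ A) (hAU : A ⊆ U) (hU : MeasurableSet U)
    (hK : MeasurableSet K) {n : ℕ}
    (hcubes : ∀ m, (dcube d n m ∩ K).Nonempty → dcube d n m ⊆ U)
    {ε : ℝ} (hε : 0 ≤ ε) :
    ε * lowDensityMass μ A ε n ≤ (μ (U \ K)).toReal := by
  have hterm : ∀ m, ε * (if (μ (dcube d n m ∩ A)).toReal <
      (1 - ε) * (μ (dcube d n m)).toReal then (μ (dcube d n m ∩ A)).toReal else 0) ≤
      (μ (dcube d n m ∩ (U \ K))).toReal := by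
    intro m
    split_ifs with hlow
    swap
    · simp
    set Q := dcube d n m
    have hsplit : (μ (Q ∩ A)).toReal + (μ (Q \ A)).toReal = (μ Q).toReal := by
      rw [← ENNReal.toReal_add (measure_ne_top _ _) (measure_ne_top _ _),
        measure_inter_add_sdiff Q hA]
    have hmono : ∀ {T}, T ⊆ Q ∩ (U \ K) → (μ T).toReal ≤ (μ (Q ∩ (U \ K))).toReal :=
      fun hT => ENNReal.toReal_mono (measure_ne_top _ _) (measure_mono hT)
    have hA0 := ENNReal.toReal_nonneg (a := μ (Q ∩ A))
    have hAc0 := ENNReal.toReal_nonneg (a := μ (Q \ A))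
    by_cases hQK : (Q ∩ K).Nonempty
    · have := hmono fun x (hx : x ∈ Q \ A) =>
        ⟨hx.1, hcubes m hQK hx.1, fun hxK => hx.2 (hKA hxK)⟩
      rw [← hsplit] at hlow
      nlinarith
    · have := hmono fun x (hx : x ∈ Q ∩ A) =>
        ⟨hx.1, hAU hx.2, fun hxK => hQK ⟨x, hx.1, hxK⟩⟩
      have hε1 : ε ≤ 1 := by
        by_contra! h
        nlinarith [mul_nonpos_of_nonpos_of_nonneg (by linarith : 1 - ε ≤ 0)
          (ENNReal.toReal_nonneg (a := μ Q))]
      nlinarith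
  rw [lowDensityMass, ← tsum_mul_left, ← tsum_toReal_measure_dcube_inter μ n (hU.diff hK)]
  exact (((summable_toReal_measure_dcube_inter μ n hA).ite_of_nonneg
    (fun _ => ENNReal.toReal_nonneg) _).mul_left ε).tsum_le_tsum hterm
    (summable_toReal_measure_dcube_inter μ n (hU.diff hK))

lemma tendsto_lowDensityMass [IsFiniteMeasure μ] (hA : MeasurableSet A) {ε : ℝ} (hε : 0 < ε) :
    Tendsto (lowDensityMass μ A ε) atTop (𝓝 0) := by
  refine tendsto_order.2 ⟨fun a ha => Eventually.of_forall fun n =>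
    ha.trans_le (lowDensityMass_nonneg μ A ε n), fun η hη => ?_⟩
  obtain ⟨K, U, hKA, hAU, hK, hU, hUK⟩ := hA.exists_isCompact_isOpen_sdiff_lt
    (measure_ne_top μ A) (ENNReal.ofReal_pos.2 (mul_pos hε hη)).ne'
  obtain ⟨r, hr, hthick⟩ := hK.exists_thickening_subset_open hU (hKA.trans hAU)
  have hdiam : Tendsto (fun n : ℕ => √d * (2 : ℝ) ^ (-(n : ℤ))) atTop (𝓝 0) := by
    simpa using (tendsto_inv_atTop_zero.comp
      (tendsto_pow_atTop_atTop_of_one_lt one_lt_two)).const_mul √d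
  filter_upwards [hdiam.eventually (gt_mem_nhds hr)] with n hn
  have hcubes : ∀ m, (dcube d n m ∩ K).Nonempty → dcube d n m ⊆ U :=
    fun m ⟨y, hyQ, hyK⟩ x hxQ =>
      hthick (mem_thickening_iff.2 ⟨y, hyK, (dist_le_of_mem_dcube hxQ hyQ).trans_lt hn⟩)
  have hmass := mul_lowDensityMass_le μ A hA hKA hAU hU.measurableSet hK.isClosed.measurableSet
    hcubes hε.le
  exact lt_of_mul_lt_mul_left (hmass.trans_lt (ENNReal.toReal_lt_of_lt_ofReal hUK)) hε.le

end LowDensity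

section Richness

variable (μ : Measure (EuclideanSpace ℝ (Fin d)))

open Classical in
def lowEntropyMass (s : ℝ) (q : ℕ) (δ : ℝ) (n : ℕ) : ℝ :=
  ∑' m : Fin d → ℤ, if 0 < μ (dcube d n m) ∧ nentropy d (cubeMeasure d n m μ) q < s - δ
    then (μ (dcube d n m)).toReal else 0

lemma sRich_iff {s : ℝ} {N q : ℕ} {δ : ℝ} :
    sRich d μ s N q δ ↔ 1 / N * ∑ n ∈ Finset.range N, lowEntropyMass μ s q δ n < δ :=
  Iff.rfl

lemma lowEntropyMass_cond_le [IsFiniteMeasure μ] {A : Set (EuclideanSpace ℝ (Fin d))}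
    (hA : MeasurableSet A) (hA0 : μ A ≠ 0) {s ε δ δ' : ℝ} (hε : ε ≤ 1 / 2)
    (hδ : δ' + (ε * d + binEntropy ε / log 2) ≤ δ) (q n : ℕ) :
    lowEntropyMass μ[|A] s q δ n ≤
      (μ A).toReal⁻¹ * (lowDensityMass μ A ε n + lowEntropyMass μ s q δ' n) := by
  have : IsProbabilityMeasure μ[|A] := cond_isProbabilityMeasure hA0
  have hcond : ∀ m, (μ[|A] (dcube d n m)).toReal =
      (μ A).toReal⁻¹ * (μ (dcube d n m ∩ A)).toReal := fun m => by
    rw [cond_apply hA, inter_comm, ENNReal.toReal_mul, ENNReal.toReal_inv]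
  have hcub : ∀ m, cubeMeasure d n m μ[|A] = cubeMeasure d n m (μ.restrict A) := fun m =>
    cubeMeasure_smul _ n m (ENNReal.inv_ne_zero.2 (measure_ne_top μ A)) (ENNReal.inv_ne_top.2 hA0)
  have hsD := (summable_toReal_measure_dcube_inter μ n hA).ite_of_nonneg
    (fun _ => ENNReal.toReal_nonneg)
    fun m => (μ (dcube d n m ∩ A)).toReal < (1 - ε) * (μ (dcube d n m)).toReal
  have hsE := (summable_toReal_measure_dcube μ n).ite_of_nonneg
    (fun _ => ENNReal.toReal_nonneg)
    fun m => 0 < μ (dcube d n m) ∧ nentropy d (cubeMeasure d n m μ) q < s - δ'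
  rw [lowEntropyMass, lowEntropyMass, lowDensityMass, ← hsD.tsum_add hsE, ← tsum_mul_left]
  refine ((summable_toReal_measure_dcube μ[|A] n).ite_of_nonneg
    (fun _ => ENNReal.toReal_nonneg) _).tsum_le_tsum (fun m => ?_) ((hsD.add hsE).mul_left _)
  by_cases hlowent : 0 < μ[|A] (dcube d n m) ∧ nentropy d (cubeMeasure d n m μ[|A]) q < s - δ
  swap
  · rw [if_neg hlowent]
    positivity
  obtain ⟨hpos, hent⟩ := hlowent
  rw [if_pos ⟨hpos, hent⟩, hcond]
  have hQA : μ (dcube d n m ∩ A) ≠ 0 := fun h => by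
    rw [cond_apply hA, inter_comm, h, mul_zero] at hpos
    exact hpos.false
  have hQ : μ (dcube d n m) ≠ 0 := fun h => hQA (measure_mono_null inter_subset_left h)
  refine mul_le_mul_of_nonneg_left ?_ (inv_nonneg.2 ENNReal.toReal_nonneg)
  by_cases hlow : (μ (dcube d n m ∩ A)).toReal < (1 - ε) * (μ (dcube d n m)).toReal
  · rw [if_pos hlow, le_add_iff_nonneg_right]
    positivity
  · have hcmp := nentropy_cubeMeasure_le μ n m hA hQ hε (not_lt.1 hlow) q
    rw [← hcub] at hcmp
    rw [if_neg hlow, if_pos ⟨pos_iff_ne_zero.2 hQ, by linarith⟩, zero_add]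
    exact ENNReal.toReal_mono (measure_ne_top _ _) (measure_mono inter_subset_left)

lemma sRich_cond_of_sRich [IsProbabilityMeasure μ] {A : Set (EuclideanSpace ℝ (Fin d))}
    (hA : MeasurableSet A) (hA0 : μ A ≠ 0) {s ε δ : ℝ} (hε : ε ≤ 1 / 2)
    (hloss : ε * d + binEntropy ε / log 2 < δ / 2) {N q : ℕ}
    (hμN : sRich d μ s N q ((μ A).toReal * δ / 4))
    (hdN : (N : ℝ)⁻¹ * ∑ n ∈ Finset.range N, lowDensityMass μ A ε n <
      (μ A).toReal * δ / 4) :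
    sRich d μ[|A] s N q δ := by
  set α := (μ A).toReal
  have hα : 0 < α := ENNReal.toReal_pos hA0 (measure_ne_top μ A)
  have hα1 : α ≤ 1 := ENNReal.toReal_le_of_le_ofReal zero_le_one (by simpa using prob_le_one)
  have hδ : 0 < δ := by
    have : 0 ≤ (N : ℝ)⁻¹ * ∑ n ∈ Finset.range N, lowDensityMass μ A ε n :=
      mul_nonneg (inv_nonneg.2 N.cast_nonneg)
        (Finset.sum_nonneg fun n _ => lowDensityMass_nonneg μ A ε n)
    nlinarith
  rw [sRich_iff] at hμN ⊢
  calc 1 / N * ∑ n ∈ Finset.range N, lowEntropyMass μ[|A] s q δ n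
      ≤ 1 / N * ∑ n ∈ Finset.range N,
          α⁻¹ * (lowDensityMass μ A ε n + lowEntropyMass μ s q (α * δ / 4) n) := by
        gcongr with n
        exact lowEntropyMass_cond_le μ hA hA0 hε (by nlinarith) q n
    _ = α⁻¹ * ((N : ℝ)⁻¹ * ∑ n ∈ Finset.range N, lowDensityMass μ A ε n
          + 1 / N * ∑ n ∈ Finset.range N, lowEntropyMass μ s q (α * δ / 4) n) := by
        rw [← Finset.mul_sum, Finset.sum_add_distrib]
        ring
    _ < α⁻¹ * (α * δ / 4 + α * δ / 4) := by gcongr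
    _ < δ := by
        field_simp
        linarith

end Richness

end

/-- **Lemma 3.2.** If `μ` is a weakly `s`-regular probability measure on `[0,1)^d` and
`μ(A) > 0`, then the normalized restriction `μ_A` is weakly `s`-regular. -/
theorem weakly_regular_subsets_of_positive_measure :
    ∀ d : ℕ, ∀ μ : MeasureTheory.Measure (EuclideanSpace ℝ (Fin d)),
    MeasureTheory.IsProbabilityMeasure μ → μ (unitCubeHO d) = 1 →
    ∀ s : ℝ, WeaklyRegular d μ s →
    ∀ A : Set (EuclideanSpace ℝ (Fin d)), MeasurableSet A → 0 < μ A →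
    WeaklyRegular d ((μ A)⁻¹ • μ.restrict A) s := by
  intro d μ _ _ s hμ A hA hA0 δ hδ
  have hα : 0 < (μ A).toReal := ENNReal.toReal_pos hA0.ne' (measure_ne_top μ A)
  obtain ⟨ε, hε0, hε, hloss⟩ := exists_mul_add_binEntropy_div_lt d (half_pos hδ)
  obtain ⟨q, N₀, hμq⟩ := hμ ((μ A).toReal * δ / 4) (by positivity)
  have hdense := (tendsto_lowDensityMass μ A hA hε0).cesaro.eventually
    (gt_mem_nhds (by positivity : 0 < (μ A).toReal * δ / 4))
  obtain ⟨N₁, hN₁⟩ := eventually_atTop.1 hdense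
  exact ⟨q, max N₀ N₁, fun N hN => sRich_cond_of_sRich μ hA hA0.ne' hε hloss
    (hμq N (le_of_max_le_left hN)) (hN₁ N (le_of_max_le_right hN))⟩
end

section
/- Given β ∈ (0, π/2), there is a constant C = C(β) > 0 such that the following holds for every k ∈ ℕ: if A ⊂ [0,1]² is k-discrete and for each a ∈ A there is a direction v ∈ S¹ such that X(a,β,v) ∩ A ∖ {a} = ∅, then #A ≤ C·2^k. -/
open MeasureTheory Metric Set Filter
open scoped ENNReal NNReal Topology

/-!
Fix a finite `sin β / 2`-net `T` of the unit circle. Label each `a ∈ A` by a direction `t ∈ T`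
close to the normal `J v` of its empty cone and by the strip of width `δ = sin β / 2 · 2^{-k}`
orthogonal to `t` that contains `a`. If `b ≠ a` carries the same label, then `b` lies outside the
cone at `a`, so `|⟪b - a, t⟫| ≥ sin β / 2 · ‖b - a‖`, while the common strip gives
`|⟪b - a, t⟫| < δ`; hence `‖b - a‖ < 2^{-k}`. By `k`-discreteness at most four points share a label,
and there are `#T · O(2^k / sin β)` labels.
-/

open InnerProductGeometry Real
open scoped RealInnerProductSpace

section AngleBounds

variable {E : Type*} [NormedAddCommGroup E] [InnerProductSpace ℝ E]

theorem abs_inner_le_cos_mul_of_le_angle {x v : E} {β : ℝ} (hβ : 0 ≤ β)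
    (h₁ : β ≤ angle x v) (h₂ : β ≤ angle x (-v)) :
    |⟪x, v⟫| ≤ cos β * (‖x‖ * ‖v‖) := by
  have hcos : ∀ w : E, β ≤ angle x w → ⟪x, w⟫ ≤ cos β * (‖x‖ * ‖w‖) := fun w h => by
    rw [← cos_angle_mul_norm_mul_norm]
    gcongr
    exact cos_le_cos_of_nonneg_of_le_pi hβ (angle_le_pi _ _) h
  have h₂' := hcos (-v) h₂
  rw [inner_neg_right, norm_neg] at h₂'
  exact abs_le.mpr ⟨by linarith, hcos v h₁⟩

theorem abs_inner_sub_lt_of_floor_div_eq {x y t : E} {δ : ℝ} (hδ : 0 < δ)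
    (h : ⌊⟪x, t⟫ / δ⌋ = ⌊⟪y, t⟫ / δ⌋) : |⟪x - y, t⟫| < δ := by
  have := Int.abs_sub_lt_one_of_floor_eq_floor h
  rwa [← sub_div, abs_div, abs_of_pos hδ, div_lt_one hδ, ← inner_sub_left] at this

variable [Fact (Module.finrank ℝ E = 2)] (o : Orientation ℝ E (Fin 2))

theorem Orientation.sin_mul_le_abs_inner_rightAngleRotation {x v : E} {β : ℝ}
    (h : |⟪x, v⟫| ≤ cos β * (‖x‖ * ‖v‖)) :
    sin β * (‖x‖ * ‖v‖) ≤ |⟪x, o.rightAngleRotation v⟫| := by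
  have hid : ⟪x, o.rightAngleRotation v⟫ ^ 2 = (‖x‖ * ‖v‖) ^ 2 - ⟪x, v⟫ ^ 2 := by
    rw [o.inner_rightAngleRotation_right, neg_sq, mul_pow, ← o.inner_sq_add_areaForm_sq x v]
    ring
  have hsq : ⟪x, v⟫ ^ 2 ≤ (cos β * (‖x‖ * ‖v‖)) ^ 2 := by
    rw [← sq_abs]
    exact pow_le_pow_left₀ (abs_nonneg _) h 2
  have : (sin β * (‖x‖ * ‖v‖)) ^ 2 ≤ ⟪x, o.rightAngleRotation v⟫ ^ 2 := by
    rw [hid, mul_pow, sin_sq]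
    nlinarith
  exact (le_abs_self _).trans (sq_le_sq.mp this)

theorem Orientation.half_sin_mul_norm_le_abs_inner {x v w : E} {β : ℝ} (hβ : 0 ≤ β)
    (hv : ‖v‖ = 1) (h₁ : β ≤ angle x v) (h₂ : β ≤ angle x (-v))
    (hw : ‖o.rightAngleRotation v - w‖ ≤ sin β / 2) :
    sin β / 2 * ‖x‖ ≤ |⟪x, w⟫| := by
  have hJ := o.sin_mul_le_abs_inner_rightAngleRotation (abs_inner_le_cos_mul_of_le_angle hβ h₁ h₂)
  rw [hv, mul_one] at hJ
  have herr : |⟪x, o.rightAngleRotation v - w⟫| ≤ ‖x‖ * (sin β / 2) :=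
    (abs_real_inner_le_norm _ _).trans (mul_le_mul_of_nonneg_left hw (norm_nonneg _))
  have hsplit : ⟪x, w⟫ = ⟪x, o.rightAngleRotation v⟫ - ⟪x, o.rightAngleRotation v - w⟫ := by
    rw [inner_sub_right]
    ring
  have := abs_sub_abs_le_abs_sub ⟪x, o.rightAngleRotation v⟫ ⟪x, o.rightAngleRotation v - w⟫
  rw [← hsplit] at this
  linarith

end AngleBounds

theorem le_angle_of_notMem_cone {a b v : Plane} {β : ℝ} (hb : b ≠ a) (h : b ∉ cone a β v) :
    β ≤ angle (b - a) v ∧ β ≤ angle (b - a) (-v) := by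
  simpa [cone, hb] using h

instance : Fact (Module.finrank ℝ Plane = 2) := ⟨finrank_euclideanSpace_fin⟩

theorem norm_sub_lt_of_floor_inner_div_eq (o : Orientation ℝ Plane (Fin 2)) {a b v t : Plane}
    {β ε : ℝ} (hβ : 0 ≤ β) (hs : 0 < sin β) (hε : 0 < ε) (hv : ‖v‖ = 1) (hb : b ≠ a)
    (hnot : b ∉ cone a β v) (ht : ‖o.rightAngleRotation v - t‖ ≤ sin β / 2)
    (hstrip : ⌊⟪b, t⟫ / (sin β / 2 * ε)⌋ = ⌊⟪a, t⟫ / (sin β / 2 * ε)⌋) : ‖b - a‖ < ε := by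
  obtain ⟨h₁, h₂⟩ := le_angle_of_notMem_cone hb hnot
  have hlow := o.half_sin_mul_norm_le_abs_inner hβ hv h₁ h₂ ht
  have hup := abs_inner_sub_lt_of_floor_div_eq (by positivity) hstrip
  exact lt_of_mul_lt_mul_left (hlow.trans_lt hup) (by positivity)

theorem unitSquare_subset_closedBall : unitSquare ⊆ closedBall (0 : Plane) 2 := by
  intro x hx
  have h0 := hx 0
  have h1 := hx 1
  rw [mem_closedBall_zero_iff, EuclideanSpace.norm_eq, sqrt_le_iff, Fin.sum_univ_two]
  simp only [Real.norm_eq_abs, sq_abs]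
  constructor <;> nlinarith

theorem Int.ncard_Icc_floor_le {x y : ℝ} (h : x ≤ y) :
    ((Set.Icc ⌊x⌋ ⌊y⌋).ncard : ℝ) ≤ y - x + 2 := by
  have hle : ⌊x⌋ ≤ ⌊y⌋ + 1 := by
    have := Int.floor_mono h
    omega
  have hcard : ((Set.Icc ⌊x⌋ ⌊y⌋).ncard : ℤ) = ⌊y⌋ + 1 - ⌊x⌋ := by
    rw [← Finset.coe_Icc, Set.ncard_coe_finset]
    exact Int.card_Icc_of_le _ _ hle
  have hcard' : ((Set.Icc ⌊x⌋ ⌊y⌋).ncard : ℝ) = ⌊y⌋ + 1 - ⌊x⌋ := by exact_mod_cast hcard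
  rw [hcard']
  linarith [Int.floor_le y, Int.sub_one_lt_floor x]

theorem Int.floor_eq_floor_of_abs_sub_lt_one_of_zmod_two {x y : ℝ} (h : |x - y| < 1)
    (hpar : (⌊x⌋ : ZMod 2) = ⌊y⌋) : ⌊x⌋ = ⌊y⌋ := by
  rw [ZMod.intCast_eq_intCast_iff_dvd_sub] at hpar
  have hlt : (⌊x⌋ : ℝ) < ⌊y⌋ + 2 := by linarith [abs_lt.mp h, Int.floor_le x, Int.lt_floor_add_one y]
  have hgt : (⌊y⌋ : ℝ) < ⌊x⌋ + 2 := by linarith [abs_lt.mp h, Int.floor_le y, Int.lt_floor_add_one x]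
  have hlt' : ⌊x⌋ < ⌊y⌋ + 2 := by exact_mod_cast hlt
  have hgt' : ⌊y⌋ < ⌊x⌋ + 2 := by exact_mod_cast hgt
  push_cast at hpar
  omega

theorem mem_dcube_floor {d : ℕ} (x : EuclideanSpace ℝ (Fin d)) (k : ℕ) :
    x ∈ dcube d k (fun i => ⌊x i * 2 ^ k⌋) := by
  intro i
  have h2k : (0 : ℝ) < 2 ^ k := by positivity
  rw [zpow_neg, zpow_natCast, ← div_eq_mul_inv, ← div_eq_mul_inv, div_le_iff₀ h2k,
    lt_div_iff₀ h2k]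
  exact ⟨Int.floor_le _, Int.lt_floor_add_one _⟩

theorem kDiscrete.eq_of_norm_sub_lt {A : Set Plane} {k : ℕ} (hA : kDiscrete A k) {a b : Plane}
    (ha : a ∈ A) (hb : b ∈ A) (hab : ‖a - b‖ < 2 ^ (-(k : ℤ)))
    (hpar : ∀ i, (⌊a i * 2 ^ k⌋ : ZMod 2) = ⌊b i * 2 ^ k⌋) : a = b := by
  have hfloor : (fun i => ⌊a i * 2 ^ k⌋) = fun i => ⌊b i * 2 ^ k⌋ := by
    funext i
    refine Int.floor_eq_floor_of_abs_sub_lt_one_of_zmod_two ?_ (hpar i)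
    have hi : |a i - b i| ≤ ‖a - b‖ := by
      simpa using PiLp.norm_apply_le (a - b) i
    rw [← sub_mul, abs_mul, abs_of_pos (by positivity : (0 : ℝ) < 2 ^ k)]
    calc |a i - b i| * 2 ^ k < 2 ^ (-(k : ℤ)) * 2 ^ k := by gcongr; exact hi.trans_lt hab
      _ = 1 := by rw [zpow_neg, zpow_natCast, inv_mul_cancel₀ (by positivity)]
  exact hA _ ⟨ha, mem_dcube_floor a k⟩ ⟨hb, hfloor ▸ mem_dcube_floor b k⟩

-- The points of a fibre of `f` are told apart by the parities of their dyadic coordinates.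
theorem kDiscrete.ncard_le_four_mul {A : Set Plane} {k : ℕ} (hA : kDiscrete A k) {α : Type*}
    {f : Plane → α} {S : Set α} (hS : S.Finite) (hf : MapsTo f A S)
    (hclose : ∀ a ∈ A, ∀ b ∈ A, a ≠ b → f a = f b → ‖a - b‖ < 2 ^ (-(k : ℤ))) :
    A.ncard ≤ 4 * S.ncard := by
  let g : Plane → α × (Fin 2 → ZMod 2) := fun a => (f a, fun i => (⌊a i * 2 ^ k⌋ : ZMod 2))
  have hg : InjOn g A := by
    intro a ha b hb hab
    by_contra hne
    simp only [g, Prod.mk.injEq] at hab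
    exact hne (hA.eq_of_norm_sub_lt ha hb (hclose a ha b hb hne hab.1) (congrFun hab.2))
  calc A.ncard ≤ (S ×ˢ (univ : Set (Fin 2 → ZMod 2))).ncard :=
        ncard_le_ncard_of_injOn g (fun a ha => ⟨hf ha, trivial⟩) hg (hS.prod finite_univ)
    _ = 4 * S.ncard := by
        rw [ncard_prod, ncard_univ, Nat.card_eq_fintype_card, Fintype.card_fun, ZMod.card,
          Fintype.card_fin]
        ring

theorem ncard_le_of_forall_cone_inter_eq_empty {β R : ℝ} (hβ₀ : 0 < β) (hβπ : β < π)
    (hR : 0 ≤ R) {T : Set Plane} (hT : T.Finite) (hTs : T ⊆ sphere 0 1)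
    (hcover : sphere 0 1 ⊆ ⋃ t ∈ T, ball t (sin β / 2)) {k : ℕ} {A : Set Plane}
    (hA : A ⊆ closedBall 0 R) (hdisc : kDiscrete A k)
    (hcone : ∀ a ∈ A, ∃ v : Plane, ‖v‖ = 1 ∧ cone a β v ∩ (A \ {a}) = ∅) :
    (A.ncard : ℝ) ≤ 4 * T.ncard * (4 * R / sin β + 2) * 2 ^ k := by
  let o : Orientation ℝ Plane (Fin 2) := (EuclideanSpace.basisFun (Fin 2) ℝ).toBasis.orientation
  have hs : 0 < sin β := sin_pos_of_pos_of_lt_pi hβ₀ hβπ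
  choose! v hv hvA using hcone
  have hnet : ∀ a ∈ A, ∃ t ∈ T, ‖o.rightAngleRotation (v a) - t‖ < sin β / 2 := by
    intro a ha
    have hJ : o.rightAngleRotation (v a) ∈ sphere (0 : Plane) 1 := by
      simp [hv a ha]
    obtain ⟨t, ht, hdist⟩ := mem_iUnion₂.mp (hcover hJ)
    exact ⟨t, ht, by rwa [mem_ball, dist_eq_norm] at hdist⟩
  choose! t htT ht using hnet
  set δ : ℝ := sin β / 2 * 2 ^ (-(k : ℤ)) with hδ
  have hclose : ∀ a ∈ A, ∀ b ∈ A, a ≠ b →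
      (t a, ⌊⟪a, t a⟫ / δ⌋) = (t b, ⌊⟪b, t b⟫ / δ⌋) → ‖a - b‖ < 2 ^ (-(k : ℤ)) := by
    intro a ha b hb hab hlabel
    obtain ⟨htab, hstrip⟩ := Prod.mk.inj hlabel
    rw [← htab] at hstrip
    rw [norm_sub_rev]
    exact norm_sub_lt_of_floor_inner_div_eq o hβ₀.le hs (by positivity) (hv a ha) (Ne.symm hab)
      (fun hb' => (hvA a ha).subset ⟨hb', hb, Ne.symm hab⟩) (ht a ha).le hstrip.symm
  have hmaps : MapsTo (fun a => (t a, ⌊⟪a, t a⟫ / δ⌋)) A (T ×ˢ Icc ⌊-R / δ⌋ ⌊R / δ⌋) := by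
    intro a ha
    have hinner : |⟪a, t a⟫| ≤ R := by
      calc |⟪a, t a⟫| ≤ ‖a‖ * ‖t a‖ := abs_real_inner_le_norm _ _
        _ ≤ R := by
          rw [mem_sphere_zero_iff_norm.mp (hTs (htT a ha)), mul_one]
          exact mem_closedBall_zero_iff.mp (hA ha)
    refine ⟨htT a ha, Int.floor_mono ?_, Int.floor_mono ?_⟩ <;>
      gcongr <;> linarith [abs_le.mp hinner]
  have hcount := hdisc.ncard_le_four_mul (hT.prod (finite_Icc _ _)) hmaps hclose
  rw [ncard_prod, ← mul_assoc] at hcount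
  have hstrips := Int.ncard_Icc_floor_le (x := -R / δ) (y := R / δ) (by gcongr; linarith)
  have h2k : (1 : ℝ) ≤ 2 ^ k := one_le_pow₀ one_le_two
  have hRδ : R / δ - -R / δ = 4 * R / sin β * 2 ^ k := by
    rw [hδ, zpow_neg, zpow_natCast]
    field_simp
    ring
  calc (A.ncard : ℝ) ≤ 4 * T.ncard * (Icc ⌊-R / δ⌋ ⌊R / δ⌋).ncard := by exact_mod_cast hcount
    _ ≤ 4 * T.ncard * (4 * R / sin β * 2 ^ k + 2 * 2 ^ k) := by
        gcongr
        linarith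
    _ = 4 * T.ncard * (4 * R / sin β + 2) * 2 ^ k := by ring

/-- **Lemma 4.1.** (discrete conical density). Given `β ∈ (0, π/2)` there is `C = C(β) > 0`
such that: if `A ⊆ [0,1]²` is `k`-discrete and each `a ∈ A` has a direction `v ∈ S¹` with
`X(a,β,v) ∩ A \ {a} = ∅`, then `#A ≤ C·2^k`. -/
theorem discrete_dense_radial_projection :
    ∀ β : ℝ, β ∈ Set.Ioo 0 (Real.pi / 2) →
    ∃ C : ℝ, 0 < C ∧ ∀ k : ℕ, ∀ A : Set Plane, A ⊆ unitSquare → kDiscrete A k →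
      (∀ a ∈ A, ∃ v : Plane, ‖v‖ = 1 ∧ cone a β v ∩ (A \ {a}) = ∅) →
      (Nat.card ↥A : ℝ) ≤ C * 2 ^ k := by
  rintro β ⟨hβ₀, hβ⟩
  have hβπ : β < π := by linarith [pi_pos]
  have hs : 0 < sin β := sin_pos_of_pos_of_lt_pi hβ₀ hβπ
  obtain ⟨T, hTs, hT, hcover⟩ :=
    finite_cover_balls_of_compact (isCompact_sphere (0 : Plane) 1) (half_pos hs)
  have hTpos : 0 < T.ncard := by
    obtain ⟨x, hx⟩ := (NormedSpace.sphere_nonempty (x := (0 : Plane))).mpr zero_le_one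
    obtain ⟨t, ht, -⟩ := mem_iUnion₂.mp (hcover hx)
    exact (ncard_pos hT).mpr ⟨t, ht⟩
  refine ⟨4 * T.ncard * (4 * 2 / sin β + 2), by positivity, fun k A hA hdisc hcone => ?_⟩
  rw [Nat.card_coe_set_eq]
  exact ncard_le_of_forall_cone_inter_eq_empty hβ₀ hβπ zero_le_two hT hTs hcover
    (hA.trans unitSquare_subset_closedBall) hdisc hcone
end
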